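/- Let m be a positive integer, let n, ν be integers with 0 ≤ n < 2m and 0 ≤ ν ≤ 2m, and let a, b ∈ ℤ. Let τ lie in the upper half-plane and z ∈ ℂ with m·z ∉ ℤ + ℤτ. Then F^{[m](a,b)}_{n,ν}(τ + 1, z) = e^{πi((n+a)² − n²)/(2m) + πi(ν+1/2)²/(2m+1)} F^{[m](a,b)}_{n,ν}(τ, z). -/
import Mathlib


noncomputable section

open Complex

/-- `e2 w = exp (2 π i w)`; with `q = e^{2πiτ}`, the power `q^x` corresponds to `e2 (x * τ)`. -/
def e2 (w : ℂ) : ℂ := Complex.exp (2 * (Real.pi : ℂ) * Complex.I * w)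

/-- Jacobi-type theta function `θ^{(ε)}_{n,m}(τ, z) = ∑_{j∈ℤ} ε^j q^{m(j+n/(2m))²} e^{2πim(j+n/(2m))z}`. -/
def jtheta (ε n m τ z : ℂ) : ℂ :=
  ∑' j : ℤ, ε ^ j *
    e2 (m * ((j : ℂ) + n / (2 * m)) ^ 2 * τ + m * ((j : ℂ) + n / (2 * m)) * z)

/-- Mock theta function `Φ₁^{(ε)[m,s]}(τ, z₁, z₂)`. -/
def Phi1 (ε m s τ z₁ z₂ : ℂ) : ℂ :=
  ∑' j : ℤ, ε ^ j *
    e2 (m * (j : ℂ) * (z₁ + z₂) + s * z₁ + (m * (j : ℂ) ^ 2 + s * (j : ℂ)) * τ) /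
      (1 - e2 (z₁ + (j : ℂ) * τ))

/-- Dedekind eta function `η(τ) = q^{1/24} ∏_{k≥1} (1 - q^k)`. -/
def dedekindEta (τ : ℂ) : ℂ := e2 (τ / 24) * ∏' k : ℕ, (1 - e2 (((k : ℂ) + 1) * τ))

/-- Jacobi theta `ϑ₁₁(τ, z) = i ∑_{j∈ℤ} (−1)^j q^{(j+1/2)²/2} e^{2πi(j+1/2)z}`. -/
def theta11 (τ z : ℂ) : ℂ :=
  Complex.I * ∑' j : ℤ, (-1 : ℂ) ^ j *
    e2 (((j : ℂ) + 1 / 2) ^ 2 / 2 * τ + ((j : ℂ) + 1 / 2) * z)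

/-- Indefinite double sum `(∑_{j,p∈ℤ, 0<p≤j} − ∑_{j,p∈ℤ, j<p≤0}) f j p`. -/
def indefSum (f : ℤ → ℤ → ℂ) : ℂ :=
  ∑' jp : ℤ × ℤ,
    ((if 0 < jp.2 ∧ jp.2 ≤ jp.1 then f jp.1 jp.2 else 0) -
      (if jp.1 < jp.2 ∧ jp.2 ≤ 0 then f jp.1 jp.2 else 0))

/-- `g^{[m]}_{n,ν}(τ)`. -/
def gfun (m : ℂ) (n ν : ℤ) (τ : ℂ) : ℂ :=
  indefSum fun j p =>
    (-1 : ℂ) ^ j *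
      e2 (((m + 1 / 2) * ((j : ℂ) + (ν : ℂ) - ((ν : ℂ) + 1 / 2) / (2 * m + 1)) ^ 2 -
        m * ((p : ℂ) + (ν : ℂ) - (n : ℂ) / (2 * m)) ^ 2) * τ)

/-- `h^{[m]}_{n,ν}(τ, z)`. -/
def hfun (m : ℂ) (n ν : ℤ) (τ z : ℂ) : ℂ :=
  ∑' j : ℤ,
    e2 (m * (j : ℂ) * z + (n : ℂ) * z / 2 +
        (m * (j : ℂ) ^ 2 + (n : ℂ) * ((j : ℂ) + (ν : ℂ))) * τ) /
      (1 - e2 (m * z + 2 * m * ((j : ℂ) + (ν : ℂ)) * τ))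

/-- `G^{[m]}_{n,ν}(τ, z)`. -/
def Gfun (m : ℂ) (n ν : ℤ) (τ z : ℂ) : ℂ :=
  gfun m n ν τ * jtheta 1 (n : ℂ) m τ z +
    (-1 : ℂ) ^ ν * e2 (-(m * (ν : ℂ) ^ 2) * τ) *
      jtheta (-1) ((ν : ℂ) + 1 / 2) (m + 1 / 2) τ 0 * hfun m n ν τ z

/-- `F^{[m](a,b)}_{n,ν}(τ, z)`. -/
def Ffun (m : ℂ) (a b n ν : ℤ) (τ z : ℂ) : ℂ :=
  e2 ((a : ℂ) * z / 2 + (a : ℂ) ^ 2 / (4 * m) * τ) *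
    Gfun m n ν τ (z + (a : ℂ) * τ / m + (b : ℂ) / m)

/-- The coefficient `f_{j,k}` of Lemma 3.1:
`f_{j,k} = (−1)^j q^{(m+1/2)(j+s/(2m+1))² − k²/(4m)} e^{−2πijm(z₁−z₂)+πik(z₁−z₂)}`. -/
def fcoef (m s τ z₁ z₂ : ℂ) (j k : ℤ) : ℂ :=
  (-1 : ℂ) ^ j *
    e2 (((m + 1 / 2) * ((j : ℂ) + s / (2 * m + 1)) ^ 2 - (k : ℂ) ^ 2 / (4 * m)) * τ +
      (-((j : ℂ) * m) + (k : ℂ) / 2) * (z₁ - z₂))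


lemma e2_add (x y : ℂ) : e2 (x + y) = e2 x * e2 y := by
  unfold e2; rw [← Complex.exp_add]; ring_nf

lemma e2_int (k : ℤ) : e2 (k : ℂ) = 1 := by
  unfold e2
  rw [show 2 * (Real.pi:ℂ) * Complex.I * k = k * (2*(Real.pi:ℂ)*Complex.I) by ring,
    Complex.exp_int_mul_two_pi_mul_I]

lemma e2_shift {x y c : ℂ} (k : ℤ) (h : x = c + k + y) : e2 x = e2 c * e2 y := by
  rw [h, e2_add, e2_add, e2_int]; ring

lemma jtheta_fac (ε n m τ z τ' z' C : ℂ)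
    (h : ∀ j : ℤ, ∃ k : ℤ,
      m * ((j : ℂ) + n / (2 * m)) ^ 2 * τ' + m * ((j : ℂ) + n / (2 * m)) * z' =
        C + (k : ℂ) + (m * ((j : ℂ) + n / (2 * m)) ^ 2 * τ + m * ((j : ℂ) + n / (2 * m)) * z)) :
    jtheta ε n m τ' z' = e2 C * jtheta ε n m τ z := by
  unfold jtheta
  rw [← tsum_mul_left]
  apply tsum_congr; intro j
  obtain ⟨k, hk⟩ := h j
  rw [e2_shift k hk]; ring

lemma hfun_fac (m : ℂ) (n ν : ℤ) (τ z τ' z' C : ℂ)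
    (h1 : ∀ j : ℤ, ∃ k : ℤ,
      m * (j : ℂ) * z' + (n : ℂ) * z' / 2 + (m * (j : ℂ) ^ 2 + (n : ℂ) * ((j : ℂ) + (ν : ℂ))) * τ' =
        C + (k : ℂ) + (m * (j : ℂ) * z + (n : ℂ) * z / 2 +
          (m * (j : ℂ) ^ 2 + (n : ℂ) * ((j : ℂ) + (ν : ℂ))) * τ))
    (h2 : ∀ j : ℤ, ∃ k : ℤ,
      m * z' + 2 * m * ((j : ℂ) + (ν : ℂ)) * τ' =
        (k : ℂ) + (m * z + 2 * m * ((j : ℂ) + (ν : ℂ)) * τ)) :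
    hfun m n ν τ' z' = e2 C * hfun m n ν τ z := by
  unfold hfun
  rw [← tsum_mul_left]
  apply tsum_congr; intro j
  obtain ⟨k1, hk1⟩ := h1 j
  obtain ⟨k2, hk2⟩ := h2 j
  have hd : e2 (m * z' + 2 * m * ((j : ℂ) + (ν : ℂ)) * τ') =
      e2 (m * z + 2 * m * ((j : ℂ) + (ν : ℂ)) * τ) := by
    rw [hk2, e2_add, e2_int, one_mul]
  rw [e2_shift k1 hk1, hd]; ring

lemma gfun_fac (m : ℂ) (n ν : ℤ) (τ C : ℂ)
    (h : ∀ j p : ℤ, ∃ k : ℤ,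
      (m + 1 / 2) * ((j : ℂ) + (ν : ℂ) - ((ν : ℂ) + 1 / 2) / (2 * m + 1)) ^ 2 -
        m * ((p : ℂ) + (ν : ℂ) - (n : ℂ) / (2 * m)) ^ 2 = C + (k : ℂ)) :
    gfun m n ν (τ + 1) = e2 C * gfun m n ν τ := by
  unfold gfun indefSum
  rw [← tsum_mul_left]
  beta_reduce
  apply tsum_congr; intro jp
  obtain ⟨k, hk⟩ := h jp.1 jp.2
  have he : e2 (((m + 1 / 2) * ((jp.1 : ℂ) + (ν : ℂ) - ((ν : ℂ) + 1 / 2) / (2 * m + 1)) ^ 2 -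
      m * ((jp.2 : ℂ) + (ν : ℂ) - (n : ℂ) / (2 * m)) ^ 2) * (τ + 1)) =
      e2 C * e2 (((m + 1 / 2) * ((jp.1 : ℂ) + (ν : ℂ) - ((ν : ℂ) + 1 / 2) / (2 * m + 1)) ^ 2 -
      m * ((jp.2 : ℂ) + (ν : ℂ) - (n : ℂ) / (2 * m)) ^ 2) * τ) := by
    apply e2_shift k
    linear_combination hk
  rw [he]
  split_ifs <;> ring


theorem stmt_16 (m : ℕ) (hm : 0 < m)
    (n ν : ℤ) (hn : 0 ≤ n ∧ n < 2 * (m : ℤ)) (hν : 0 ≤ ν ∧ ν ≤ 2 * (m : ℤ)) (a b : ℤ)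
    (τ : ℂ) (hτ : 0 < τ.im) (z : ℂ)
    (hz : ∀ k l : ℤ, (m : ℂ) * z ≠ (k : ℂ) + (l : ℂ) * τ) :
    Ffun (m : ℂ) a b n ν (τ + 1) z =
      e2 ((((n : ℂ) + (a : ℂ)) ^ 2 - (n : ℂ) ^ 2) / (4 * (m : ℂ)) +
          ((ν : ℂ) + 1 / 2) ^ 2 / (2 * (2 * (m : ℂ) + 1))) *
        Ffun (m : ℂ) a b n ν τ z := by
  have hm0 : (m : ℂ) ≠ 0 := Nat.cast_ne_zero.mpr hm.ne'
  have h2m1 : 2 * (m : ℂ) + 1 ≠ 0 := by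
    intro h
    have h' : ((2 * m + 1 : ℕ) : ℂ) = 0 := by push_cast; linear_combination h
    exact Nat.cast_ne_zero.mpr (by omega) h'
  have E1 : (2 * (m : ℂ) + 1) * (2 * (m : ℂ) + 1)⁻¹ = 1 := mul_inv_cancel₀ h2m1
  have E2 : (2 * (m : ℂ)) * (2 * (m : ℂ))⁻¹ = 1 :=
    mul_inv_cancel₀ (mul_ne_zero two_ne_zero hm0)
  have E3 : (2 * (2 * (m : ℂ) + 1)) * (2 * (2 * (m : ℂ) + 1))⁻¹ = 1 :=
    mul_inv_cancel₀ (mul_ne_zero two_ne_zero h2m1)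
  have E4 : (4 * (m : ℂ)) * (4 * (m : ℂ))⁻¹ = 1 :=
    mul_inv_cancel₀ (mul_ne_zero (by norm_num) hm0)
  have E5 : (m : ℂ) * ((m : ℂ))⁻¹ = 1 := mul_inv_cancel₀ hm0
  set Cν : ℂ := ((ν : ℂ) + 1 / 2) ^ 2 / (2 * (2 * (m : ℂ) + 1)) with hCν
  set Ct : ℂ := Cν + (n : ℂ) * (a : ℂ) / (2 * (m : ℂ)) with hCt
  set w : ℂ := z + (a : ℂ) * τ / (m : ℂ) + (b : ℂ) / (m : ℂ) with hw
  have hg : gfun (m : ℂ) n ν (τ + 1) =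
      e2 (Cν - (n : ℂ) ^ 2 / (4 * (m : ℂ))) * gfun (m : ℂ) n ν τ := by
    apply gfun_fac
    intro j p
    refine ⟨(m : ℤ) * (j + ν) ^ 2 + (j + ν) * (j + ν - 1) / 2 - ν * (j + ν)
      - (m : ℤ) * (p + ν) ^ 2 + n * (p + ν), ?_⟩
    have hev : (2 : ℤ) ∣ (j + ν) * (j + ν - 1) := by
      rcases Int.even_or_odd (j + ν) with ⟨t, ht⟩ | ⟨t, ht⟩
      · exact ⟨t * (j + ν - 1), by rw [ht]; ring⟩
      · exact ⟨(j + ν) * t, by rw [ht]; ring⟩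
    have hd : (((j + ν) * (j + ν - 1) / 2 : ℤ) : ℂ) * 2 =
        ((j : ℂ) + (ν : ℂ)) * ((j : ℂ) + (ν : ℂ) - 1) := by
      rw [show (((j + ν) * (j + ν - 1) / 2 : ℤ) : ℂ) * 2 =
        (((j + ν) * (j + ν - 1) / 2 * 2 : ℤ) : ℂ) by push_cast; ring,
        Int.ediv_mul_cancel hev]
      push_cast; ring
    have hD : (((j + ν) * (j + ν - 1) / 2 : ℤ) : ℂ) =
        ((j : ℂ) + (ν : ℂ)) * ((j : ℂ) + (ν : ℂ) - 1) / 2 := by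
      linear_combination hd / 2
    push_cast
    rw [hD, hCν]
    linear_combination
      (((ν : ℂ) + 1/2) ^ 2 * (2 * (m : ℂ) + 1)⁻¹ / 2 +
        ((ν : ℂ) + 1/2) ^ 2 * (2 * (2 * (m : ℂ) + 1))⁻¹ -
        ((j : ℂ) + (ν : ℂ)) * ((ν : ℂ) + 1/2)) * E1 +
      (((p : ℂ) + (ν : ℂ)) * (n : ℂ) - (n : ℂ) ^ 2 * (2 * (m : ℂ))⁻¹ / 2 -
        (n : ℂ) ^ 2 * (4 * (m : ℂ))⁻¹) * E2 +
      (-(((ν : ℂ) + 1/2) ^ 2 * (2 * (m : ℂ) + 1)⁻¹ / 2)) * E3 +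
      ((n : ℂ) ^ 2 * (2 * (m : ℂ))⁻¹ / 2) * E4
  have hθ : jtheta 1 (n : ℂ) (m : ℂ) (τ + 1) (w + (a : ℂ) / (m : ℂ)) =
      e2 (Ct - (Cν - (n : ℂ) ^ 2 / (4 * (m : ℂ)))) * jtheta 1 (n : ℂ) (m : ℂ) τ w := by
    apply jtheta_fac
    intro j
    refine ⟨(m : ℤ) * j ^ 2 + n * j + j * a, ?_⟩
    push_cast
    rw [hCt, hCν]
    linear_combination
      ((j : ℂ) * (n : ℂ) + (n : ℂ) ^ 2 * (2 * (m : ℂ))⁻¹ / 2 +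
        (n : ℂ) ^ 2 * (4 * (m : ℂ))⁻¹) * E2 +
      (-((n : ℂ) ^ 2 * (2 * (m : ℂ))⁻¹ / 2)) * E4 +
      ((a : ℂ) * (j : ℂ) + (a : ℂ) * (n : ℂ) * (2 * (m : ℂ))⁻¹) * E5
  have hθm : jtheta (-1) ((ν : ℂ) + 1 / 2) ((m : ℂ) + 1 / 2) (τ + 1) 0 =
      e2 Cν * jtheta (-1) ((ν : ℂ) + 1 / 2) ((m : ℂ) + 1 / 2) τ 0 := by
    apply jtheta_fac
    intro j
    refine ⟨(m : ℤ) * j ^ 2 + ν * j + j * (j + 1) / 2, ?_⟩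
    have hev : (2 : ℤ) ∣ j * (j + 1) := (Int.even_mul_succ_self j).two_dvd
    have hd : ((j * (j + 1) / 2 : ℤ) : ℂ) * 2 = (j : ℂ) * ((j : ℂ) + 1) := by
      rw [show ((j * (j + 1) / 2 : ℤ) : ℂ) * 2 = ((j * (j + 1) / 2 * 2 : ℤ) : ℂ) by
        push_cast; ring, Int.ediv_mul_cancel hev]
      push_cast; ring
    have hD : ((j * (j + 1) / 2 : ℤ) : ℂ) = (j : ℂ) * ((j : ℂ) + 1) / 2 := by
      linear_combination hd / 2
    push_cast
    rw [hD, hCν]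
    linear_combination
      ((j : ℂ) * ((ν : ℂ) + 1/2) + ((ν : ℂ) + 1/2) ^ 2 * (2 * (m : ℂ) + 1)⁻¹ / 2 +
        ((ν : ℂ) + 1/2) ^ 2 * (2 * (2 * (m : ℂ) + 1))⁻¹) * E1 +
      (-(((ν : ℂ) + 1/2) ^ 2 * (2 * (m : ℂ) + 1)⁻¹ / 2)) * E3
  have hh : hfun (m : ℂ) n ν (τ + 1) (w + (a : ℂ) / (m : ℂ)) =
      e2 (Ct - Cν) * hfun (m : ℂ) n ν τ w := by
    apply hfun_fac
    · intro j
      refine ⟨(m : ℤ) * j ^ 2 + n * (j + ν) + j * a, ?_⟩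
      push_cast
      rw [hCt, hCν]
      linear_combination
        ((j : ℂ) * (a : ℂ) + (n : ℂ) * (a : ℂ) * (2 * (m : ℂ))⁻¹) * E5 +
        (-((n : ℂ) * (a : ℂ) * ((m : ℂ))⁻¹ / 2)) * E2
    · intro j
      refine ⟨a + 2 * (m : ℤ) * (j + ν), ?_⟩
      push_cast
      linear_combination (a : ℂ) * E5
  have hq : e2 (-((m : ℂ) * (ν : ℂ) ^ 2) * (τ + 1)) = e2 (-((m : ℂ) * (ν : ℂ) ^ 2) * τ) := by
    rw [show -((m : ℂ) * (ν : ℂ) ^ 2) * (τ + 1) =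
      ((-(m : ℤ) * ν ^ 2 : ℤ) : ℂ) + -((m : ℂ) * (ν : ℂ) ^ 2) * τ by push_cast; ring,
      e2_add, e2_int, one_mul]
  have hG : Gfun (m : ℂ) n ν (τ + 1) (w + (a : ℂ) / (m : ℂ)) = e2 Ct * Gfun (m : ℂ) n ν τ w := by
    unfold Gfun
    rw [hg, hθ, hθm, hh, hq]
    have h1 : e2 (Cν - (n : ℂ) ^ 2 / (4 * (m : ℂ))) *
        e2 (Ct - (Cν - (n : ℂ) ^ 2 / (4 * (m : ℂ)))) = e2 Ct := by
      rw [← e2_add]; ring_nf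
    have h2 : e2 Cν * e2 (Ct - Cν) = e2 Ct := by
      rw [← e2_add]; ring_nf
    linear_combination (gfun (m : ℂ) n ν τ * jtheta 1 (n : ℂ) (m : ℂ) τ w) * h1 +
      ((-1 : ℂ) ^ ν * e2 (-((m : ℂ) * (ν : ℂ) ^ 2) * τ) *
        jtheta (-1) ((ν : ℂ) + 1 / 2) ((m : ℂ) + 1 / 2) τ 0 * hfun (m : ℂ) n ν τ w) * h2
  unfold Ffun
  have harg : z + (a : ℂ) * (τ + 1) / (m : ℂ) + (b : ℂ) / (m : ℂ) = w + (a : ℂ) / (m : ℂ) := by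
    rw [hw]; ring
  rw [harg, ← hw, hG]
  have hfin : e2 ((a : ℂ) * z / 2 + (a : ℂ) ^ 2 / (4 * (m : ℂ)) * (τ + 1)) * e2 Ct =
      e2 ((((n : ℂ) + (a : ℂ)) ^ 2 - (n : ℂ) ^ 2) / (4 * (m : ℂ)) + Cν) *
        e2 ((a : ℂ) * z / 2 + (a : ℂ) ^ 2 / (4 * (m : ℂ)) * τ) := by
    rw [← e2_add, ← e2_add]
    congr 1
    rw [hCt, hCν]
    linear_combination (2 * (n : ℂ) * (a : ℂ) * (4 * (m : ℂ))⁻¹) * E2 +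
      (-((n : ℂ) * (a : ℂ) * (2 * (m : ℂ))⁻¹)) * E4
  linear_combination (Gfun (m : ℂ) n ν τ w) * hfin
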